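/- For every permutation π ∈ S_n, aid φ(π) = inv π. -/

import Mathlib

namespace PaperStats

/-- `des w` is the number of descents of the word `w` (0-indexed positions `i`
with `w(i) > w(i+1)`). -/
def des (w : List ℕ) : ℕ :=
  ((Finset.range (w.length - 1)).filter fun i => w.getD (i + 1) 0 < w.getD i 0).card

/-- `inv w` is the number of inversions of the word `w`: pairs of positions
`i < j` with `w(i) > w(j)`. -/
def inv (w : List ℕ) : ℕ :=
  ((Finset.range w.length ×ˢ Finset.range w.length).filter
    fun p => p.1 < p.2 ∧ w.getD p.2 0 < w.getD p.1 0).card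

/-- An inversion `(i,j)` of `w` is admissible if either `w(j) < w(j+1)`
(`j` is not the last position and is followed by an ascent), or there is a
position `k` strictly between `i` and `j` with `w(j) > w(k)`. -/
def IsAdmissible (w : List ℕ) (i j : ℕ) : Prop :=
  (j + 1 < w.length ∧ w.getD j 0 < w.getD (j + 1) 0) ∨
    ∃ k, i < k ∧ k < j ∧ w.getD k 0 < w.getD j 0

instance (w : List ℕ) (i j : ℕ) : Decidable (IsAdmissible w i j) :=
  decidable_of_iff ((j + 1 < w.length ∧ w.getD j 0 < w.getD (j + 1) 0) ∨
      ∃ k ∈ Finset.Ioo i j, w.getD k 0 < w.getD j 0) (by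
    unfold IsAdmissible
    simp only [Finset.mem_Ioo, and_assoc])

/-- `ai w` is the number of admissible inversions of `w`. -/
def ai (w : List ℕ) : ℕ :=
  ((Finset.range w.length ×ˢ Finset.range w.length).filter
    fun p => p.1 < p.2 ∧ w.getD p.2 0 < w.getD p.1 0 ∧ IsAdmissible w p.1 p.2).card

/-- `aid w = ai w + des w`. -/
def aid (w : List ℕ) : ℕ := ai w + des w

/-- The statistic `aix`, defined recursively: `aix ∅ = 0`; writing a nonempty
word as `π = α m β`, where `m` is the smallest letter and `α` is the maximal
prefix not containing `m`, one has `aix π = 1 + aix β` if `α = ∅`,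
`aix π = 0` if `β = ∅` (and `α ≠ ∅`), and `aix π = aix α` otherwise. -/
def aix : List ℕ → ℕ
  | [] => 0
  | x :: xs =>
    if (x :: xs).takeWhile (fun a => decide (a ≠ xs.foldr min x)) = [] then
      1 + aix (((x :: xs).dropWhile (fun a => decide (a ≠ xs.foldr min x))).tail)
    else if ((x :: xs).dropWhile (fun a => decide (a ≠ xs.foldr min x))).tail = [] then 0
    else aix ((x :: xs).takeWhile (fun a => decide (a ≠ xs.foldr min x)))
termination_by w => w.length
decreasing_by
  · simp only [List.foldr_attach] at *
    have h1 := (List.dropWhile_sublist (l := x :: xs) (fun a => decide (a ≠ xs.foldr min x))).length_le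
    have h2 := List.length_tail (l := (x :: xs).dropWhile (fun a => decide (a ≠ xs.foldr min x)))
    simp only [List.length_cons] at *
    omega
  · rename_i hα hβ
    simp only [List.foldr_attach] at *
    have h0 : ((x :: xs).takeWhile (fun a => decide (a ≠ xs.foldr min x))) ++
        ((x :: xs).dropWhile (fun a => decide (a ≠ xs.foldr min x))) = x :: xs :=
      List.takeWhile_append_dropWhile ..
    have h1 : ((x :: xs).dropWhile (fun a => decide (a ≠ xs.foldr min x))) ≠ [] := by
      intro h
      apply hβ
      rw [h]
      rfl
    have h2 := congrArg List.length h0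
    simp only [List.length_append, List.length_cons] at h2
    have h3 : 0 < ((x :: xs).dropWhile (fun a => decide (a ≠ xs.foldr min x))).length :=
      List.length_pos_iff.mpr h1
    simp only [List.length_cons]
    omega

/-- The map `f(k,τ)`: with `m` the smallest letter of `τ` together with `k`
(`k` not occurring in `τ`), and `τ = α m β` with `α` the maximal prefix of `τ`
avoiding `m`: `f(k,∅) = k`; `f(k,τ) = kτ` if `k = m`; and for `k > m`,
`f(k,τ) = f(k,β) m` if `α = ∅`, `f(k,τ) = k m α` if `β = ∅`, and
`f(k,τ) = f(k,α) m β` otherwise. -/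
def fkt (k : ℕ) : List ℕ → List ℕ
  | [] => [k]
  | x :: xs =>
    if k < xs.foldr min x then k :: x :: xs
    else if (x :: xs).takeWhile (fun a => decide (a ≠ xs.foldr min x)) = [] then
      fkt k (((x :: xs).dropWhile (fun a => decide (a ≠ xs.foldr min x))).tail) ++
        [xs.foldr min x]
    else if ((x :: xs).dropWhile (fun a => decide (a ≠ xs.foldr min x))).tail = [] then
      k :: xs.foldr min x :: ((x :: xs).takeWhile (fun a => decide (a ≠ xs.foldr min x)))
    else
      fkt k ((x :: xs).takeWhile (fun a => decide (a ≠ xs.foldr min x))) ++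
        xs.foldr min x :: ((x :: xs).dropWhile (fun a => decide (a ≠ xs.foldr min x))).tail
termination_by w => w.length
decreasing_by
  · simp only [List.foldr_attach] at *
    have h1 := (List.dropWhile_sublist (l := x :: xs) (fun a => decide (a ≠ xs.foldr min x))).length_le
    have h2 := List.length_tail (l := (x :: xs).dropWhile (fun a => decide (a ≠ xs.foldr min x)))
    simp only [List.length_cons] at *
    omega
  · rename_i hk hα hβ
    simp only [List.foldr_attach] at *
    have h0 : ((x :: xs).takeWhile (fun a => decide (a ≠ xs.foldr min x))) ++
        ((x :: xs).dropWhile (fun a => decide (a ≠ xs.foldr min x))) = x :: xs :=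
      List.takeWhile_append_dropWhile ..
    have h1 : ((x :: xs).dropWhile (fun a => decide (a ≠ xs.foldr min x))) ≠ [] := by
      intro h
      apply hβ
      rw [h]
      rfl
    have h2 := congrArg List.length h0
    simp only [List.length_append, List.length_cons] at h2
    have h3 : 0 < ((x :: xs).dropWhile (fun a => decide (a ≠ xs.foldr min x))).length :=
      List.length_pos_iff.mpr h1
    simp only [List.length_cons]
    omega

/-- `ini w` is the first letter of `w`. -/
def ini (w : List ℕ) : ℕ := w.headD 0

/-- The word of a permutation `π ∈ S_n`, namely `π(1) π(2) … π(n)`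
(with values in `{1, …, n}`). -/
def permList {n : ℕ} (π : Equiv.Perm (Fin n)) : List ℕ :=
  List.ofFn fun i => (π i : ℕ) + 1

/-- The bijection `φ`: `φ(π) = f(π(1), f(π(2), ⋯ f(π(n), ∅) ⋯ ))`. -/
def phiW (w : List ℕ) : List ℕ := w.foldr fkt []

/-- Helper: `decRun l` splits `l` into its maximal weakly decreasing prefix
and the rest. -/
def decRun : List ℕ → List ℕ × List ℕ
  | [] => ([], [])
  | [x] => ([x], [])
  | x :: y :: rest =>
    if y ≤ x then ((x :: (decRun (y :: rest)).1), (decRun (y :: rest)).2)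
    else ([x], y :: rest)

theorem decRun_append : ∀ l : List ℕ, (decRun l).1 ++ (decRun l).2 = l
  | [] => rfl
  | [x] => rfl
  | x :: y :: rest => by
    rw [decRun]
    split
    · simpa using decRun_append (y :: rest)
    · rfl

/-- Helper computing the hook factorization of a word from its reversal: the
rightmost hook of the word starts at its rightmost descent top, i.e. it is
obtained by extending the maximal weakly decreasing prefix of the reversed word
by one more letter; the process is repeated on what remains, and when no
letters usable for a hook remain the word left over is the increasing part
`π₀`. The result is `(π₀, [π₁, …, π_k])`. -/
def hookRev (r : List ℕ) : List ℕ × List (List ℕ) :=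
  match h : (decRun r).2 with
  | [] => (r.reverse, [])
  | z :: rest =>
    ((hookRev rest).1, (hookRev rest).2 ++ [z :: (decRun r).1.reverse])
termination_by r.length
decreasing_by
  have h2 := congrArg List.length (decRun_append r)
  rw [h] at h2
  simp only [List.length_append, List.length_cons] at h2
  omega

/-- The hook factorization `(π₀, [π₁, …, π_k])` of a word
`w = π₀ π₁ ⋯ π_k`, where `π₀` is increasing and each `π_i`, `i ≥ 1`, is a
hook. -/
def hookSplit (w : List ℕ) : List ℕ × List (List ℕ) := hookRev w.reverse

/-- `pix w` is the length of the initial increasing factor `π₀` in the hook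
factorization of `w`. -/
def pix (w : List ℕ) : ℕ := (hookSplit w).1.length

/-- `lec w` is the sum of the numbers of inversions of the hooks in the hook
factorization of `w`. -/
def lec (w : List ℕ) : ℕ := ((hookSplit w).2.map inv).sum

/-- A word `w(1) … w(r)` with `r ≥ 2` is a hook if
`w(1) > w(2) ≤ w(3) ≤ ⋯ ≤ w(r)`. -/
def IsHook (w : List ℕ) : Prop :=
  ∃ a b rest, w = a :: b :: rest ∧ b < a ∧ List.Chain' (· ≤ ·) (b :: rest)

/-- `w(i)` is a left-to-right maximum of `w` if `w(k) < w(i)` for all `k < i`. -/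
def IsLRMax (w : List ℕ) (i : ℕ) : Prop := ∀ k < i, w.getD k 0 < w.getD i 0

instance (w : List ℕ) (i : ℕ) : Decidable (IsLRMax w i) := by
  unfold IsLRMax; infer_instance

/-- `mix w` counts the pairs of positions `i < j` such that either
`w(i) > w(j)` and `w(i)` is a left-to-right maximum, or `w(i) < w(j)` and
there is `k < i` with `w(k) > w(j)`. -/
def mix (w : List ℕ) : ℕ :=
  ((Finset.range w.length ×ˢ Finset.range w.length).filter fun p =>
    p.1 < p.2 ∧ ((w.getD p.2 0 < w.getD p.1 0 ∧ IsLRMax w p.1) ∨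
      (w.getD p.1 0 < w.getD p.2 0 ∧ ∃ k ∈ Finset.range p.1, w.getD p.2 0 < w.getD k 0))).card

/-- `das w` counts the positions `i` such that either `w(i) > w(i+1)` and
`w(i)` is a left-to-right maximum, or `w(i) < w(i+1)` and there is `k < i`
with `w(k) > w(i+1)`. -/
def das (w : List ℕ) : ℕ :=
  ((Finset.range (w.length - 1)).filter fun i =>
    (w.getD (i + 1) 0 < w.getD i 0 ∧ IsLRMax w i) ∨
      (w.getD i 0 < w.getD (i + 1) 0 ∧ ∃ k ∈ Finset.range i, w.getD (i + 1) 0 < w.getD k 0)).card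

/-- The values of the left-to-right maxima of a word, listed in increasing
order (which is also their order of occurrence). -/
def lrMaxima : List ℕ → List ℕ
  | [] => []
  | x :: xs => x :: lrMaxima (xs.filter fun a => decide (x < a))
termination_by l => l.length
decreasing_by
  have := xs.length_filter_le (fun a => decide (x < a))
  simp only [List.length_cons]
  simp only [List.length_unattach]
  exact Nat.lt_succ_of_le ((List.length_filter_le _ _).trans (List.length_attach).le)

/-- `Bset w m` is the list of entries of `w` that are smaller than `m` and lie
to the right of (the first occurrence of) `m` in `w`. -/
def Bset (w : List ℕ) (m : ℕ) : List ℕ :=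
  ((w.dropWhile fun a => decide (a ≠ m)).tail).filter fun a => decide (a < m)

/-- Helper for `psiS`: replace the letters satisfying `P`, in order, by the
letters of the first list. -/
def replaceSub (P : ℕ → Bool) : List ℕ → List ℕ → List ℕ
  | _, [] => []
  | rs, x :: xs =>
    if P x then rs.headD x :: replaceSub P rs.tail xs else x :: replaceSub P rs xs

/-- `psiS S w` is `ψ_S(w)`: the result of reversing, in place, the subword of
`w` consisting of the entries belonging to `S`. -/
def psiS (S : List ℕ) (w : List ℕ) : List ℕ :=
  replaceSub (fun a => decide (a ∈ S)) ((w.filter fun a => decide (a ∈ S)).reverse) w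

/-- Helper applying the alternating composition
`ψ_{B₁} ∘ ψ_{B₂ ∩ B₁} ∘ ψ_{B₂} ∘ ⋯ ∘ ψ_{B_{k-1}} ∘ ψ_{B_k ∩ B_{k-1}} ∘ ψ_{B_k}`
to `w`, given the list `[B_k, B_{k-1}, …, B₁]`. -/
def psiChain : List (List ℕ) → List ℕ → List ℕ
  | [], w => w
  | [B], w => psiS B w
  | B :: B' :: rest, w => psiChain (B' :: rest) (psiS (B.inter B') (psiS B w))

/-- The Brändén–Claesson bijection `ψ`. -/
def psi (w : List ℕ) : List ℕ :=
  psiChain (((lrMaxima w).map (Bset w)).reverse) w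

/-!
Write a word `τ` with distinct letters as `α m β`, `m` its least letter. As `m` is smaller than
every other letter, `aid` splits across it: `aid (m β) = aid β`, and for `α ≠ ∅`
`aid (α m β) = aid α + aid β + c(α, β) + (if β = ∅ then 1 else |α| + 1)`, where `c(α, β)` counts the
pairs `(a, b) ∈ α × β` with `a > b`. Feeding the four cases of the definition of `f(k, τ)` through
this formula shows, by induction along such splittings, that `aid f(k, τ) = aid τ + #{a ∈ τ | a < k}`.
This is exactly how `inv` grows when `k` is prepended, so `aid φ(π) = inv π` by induction on `n`.
-/

open Finset

lemma sum_range_length_getD {M : Type*} [AddCommMonoid M] (l : List ℕ) (f : ℕ → M) :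
    ∑ i ∈ range l.length, f (l.getD i 0) = (l.map f).sum := by
  induction l with
  | nil => simp
  | cons a l ih =>
    simp only [List.length_cons, sum_range_succ', List.getD_cons_succ, List.getD_cons_zero, ih,
      List.map_cons, List.sum_cons, add_comm]

lemma sum_range_length_ite_getD (l : List ℕ) (p : ℕ → Bool) :
    ∑ i ∈ range l.length, (if p (l.getD i 0) then 1 else 0) = l.countP p := by
  rw [sum_range_length_getD (f := fun a => if p a then 1 else 0)]
  induction l with
  | nil => simp
  | cons a l ih => simp [List.countP_cons, ih, add_comm]

lemma sum_range_add_sum_range_add {M : Type*} [AddCommMonoid M] (f : ℕ → ℕ → M) (a b : ℕ) :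
    ∑ i ∈ range (a + b), ∑ j ∈ range (a + b), f i j =
      ∑ i ∈ range a, ∑ j ∈ range a, f i j + ∑ i ∈ range a, ∑ j ∈ range b, f i (a + j) +
        ∑ i ∈ range b, ∑ j ∈ range a, f (a + i) j +
          ∑ i ∈ range b, ∑ j ∈ range b, f (a + i) (a + j) := by
  simp only [sum_range_add, sum_add_distrib]
  abel

lemma getD_append_length_add {α : Type*} (u w : List α) (d : α) (j : ℕ) :
    (u ++ w).getD (u.length + j) d = w.getD j d := by
  rw [List.getD_append_right _ _ _ _ (by omega), Nat.add_sub_cancel_left]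

lemma getD_mem_of_lt {l : List ℕ} {i : ℕ} (h : i < l.length) : l.getD i 0 ∈ l := by
  rw [List.getD_eq_getElem _ _ h]
  exact List.getElem_mem h

lemma getD_append_cons_length (u v : List ℕ) (m : ℕ) : (u ++ m :: v).getD u.length 0 = m := by
  simp

def IsAdmissibleInversion (w : List ℕ) (i j : ℕ) : Prop :=
  i < j ∧ w.getD j 0 < w.getD i 0 ∧ IsAdmissible w i j

instance (w : List ℕ) (i j : ℕ) : Decidable (IsAdmissibleInversion w i j) := by
  unfold IsAdmissibleInversion; infer_instance

lemma ai_eq_sum (w : List ℕ) :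
    ai w = ∑ i ∈ range w.length, ∑ j ∈ range w.length,
      if IsAdmissibleInversion w i j then 1 else 0 := by
  rw [ai, card_filter, sum_product]
  rfl

lemma isAdmissible_append_length_add (u w : List ℕ) (i j : ℕ) :
    IsAdmissible (u ++ w) (u.length + i) (u.length + j) ↔ IsAdmissible w i j := by
  simp only [IsAdmissible, List.length_append, Nat.add_assoc, getD_append_length_add]
  refine or_congr (and_congr (by omega) Iff.rfl) ⟨?_, ?_⟩
  · rintro ⟨k, hik, hkj, hk⟩
    rw [List.getD_append_right _ _ _ _ (by omega)] at hk
    exact ⟨k - u.length, by omega, by omega, hk⟩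
  · rintro ⟨k, hik, hkj, hk⟩
    exact ⟨u.length + k, by omega, by omega, by rwa [getD_append_length_add]⟩

lemma isAdmissibleInversion_append_length_add (u w : List ℕ) (i j : ℕ) :
    IsAdmissibleInversion (u ++ w) (u.length + i) (u.length + j) ↔
      IsAdmissibleInversion w i j := by
  simp only [IsAdmissibleInversion, getD_append_length_add, isAdmissible_append_length_add,
    Nat.add_lt_add_iff_left]

lemma ai_append (u w : List ℕ) :
    ai (u ++ w) = ∑ i ∈ range u.length, ∑ j ∈ range u.length,
        (if IsAdmissibleInversion (u ++ w) i j then 1 else 0) +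
      ∑ i ∈ range u.length, ∑ j ∈ range w.length,
        (if IsAdmissibleInversion (u ++ w) i (u.length + j) then 1 else 0) + ai w := by
  rw [ai_eq_sum, List.length_append, sum_range_add_sum_range_add, ai_eq_sum]
  simp only [isAdmissibleInversion_append_length_add]
  have hlower : ∑ i ∈ range w.length, ∑ j ∈ range u.length,
      (if IsAdmissibleInversion (u ++ w) (u.length + i) j then 1 else 0) = 0 :=
    sum_eq_zero fun i _ => sum_eq_zero fun j hj =>
      if_neg fun h => absurd h.1 (by rw [mem_range] at hj; omega)
  rw [hlower, add_zero]

def crossInv (u v : List ℕ) : ℕ := (u.map fun x => v.countP (· < x)).sum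

lemma crossInv_nil_right (u : List ℕ) : crossInv u [] = 0 := by
  simp [crossInv]

lemma crossInv_cons (k : ℕ) (u v : List ℕ) :
    crossInv (k :: u) v = v.countP (· < k) + crossInv u v := by
  simp [crossInv]

lemma crossInv_eq_of_perm {u u' : List ℕ} (h : u.Perm u') (v : List ℕ) :
    crossInv u v = crossInv u' v :=
  (h.map _).sum_eq

section MinimumInMiddle

variable {u v : List ℕ} {m : ℕ}

lemma isAdmissible_append_cons_left (hu : ∀ x ∈ u, m < x) {i j : ℕ} (hj : j < u.length) :
    IsAdmissible (u ++ m :: v) i j ↔ IsAdmissible u i j := by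
  have hwj : (u ++ m :: v).getD j 0 = u.getD j 0 := List.getD_append _ _ _ _ hj
  unfold IsAdmissible
  refine or_congr ?_ ⟨?_, ?_⟩
  · rcases Nat.lt_or_ge (j + 1) u.length with h | h
    · rw [List.getD_append _ _ _ _ h, hwj, List.length_append]
      exact and_congr (by omega) Iff.rfl
    · have hjL : j + 1 = u.length := by omega
      rw [hjL, getD_append_cons_length, hwj]
      exact iff_of_false (fun h' => absurd (hu _ (getD_mem_of_lt hj)) (by omega)) (by omega)
  · rintro ⟨k, hik, hkj, hk⟩
    exact ⟨k, hik, hkj, by rwa [List.getD_append _ _ _ _ (by omega), hwj] at hk⟩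
  · rintro ⟨k, hik, hkj, hk⟩
    exact ⟨k, hik, hkj, by rwa [List.getD_append _ _ _ _ (by omega), hwj]⟩

lemma isAdmissibleInversion_append_cons_left (hu : ∀ x ∈ u, m < x) {i j : ℕ}
    (hi : i < u.length) (hj : j < u.length) :
    IsAdmissibleInversion (u ++ m :: v) i j ↔ IsAdmissibleInversion u i j := by
  simp only [IsAdmissibleInversion, List.getD_append _ _ _ _ hi, List.getD_append _ _ _ _ hj,
    isAdmissible_append_cons_left hu hj]

lemma isAdmissibleInversion_append_cons_length (hu : ∀ x ∈ u, m < x) (hv : ∀ y ∈ v, m < y)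
    {i : ℕ} (hi : i < u.length) :
    IsAdmissibleInversion (u ++ m :: v) i u.length ↔ v ≠ [] := by
  have hmi : m < u.getD i 0 := hu _ (getD_mem_of_lt hi)
  have hnext : (u ++ m :: v).getD (u.length + 1) 0 = v.getD 0 0 :=
    getD_append_length_add u (m :: v) 0 1
  simp only [IsAdmissibleInversion, IsAdmissible, getD_append_cons_length,
    List.getD_append _ _ _ _ hi, hnext, hi, hmi, true_and, List.length_append, List.length_cons]
  constructor
  · rintro (⟨hlen, -⟩ | ⟨k, -, hk, hkm⟩)
    · rintro rfl
      simp at hlen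
    · rw [List.getD_append _ _ _ _ hk] at hkm
      exact absurd (hu _ (getD_mem_of_lt hk)) (by omega)
  · intro hv0
    have hpos : 0 < v.length := List.length_pos_iff.2 hv0
    exact Or.inl ⟨by omega, hv _ (getD_mem_of_lt hpos)⟩

lemma isAdmissibleInversion_append_cons_right (hv : ∀ y ∈ v, m < y)
    {i j : ℕ} (hi : i < u.length) (hj : j < v.length) :
    IsAdmissibleInversion (u ++ m :: v) i (u.length + (j + 1)) ↔ v.getD j 0 < u.getD i 0 := by
  have hwj : (u ++ m :: v).getD (u.length + (j + 1)) 0 = v.getD j 0 :=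
    getD_append_length_add u (m :: v) 0 (j + 1)
  have hadm : IsAdmissible (u ++ m :: v) i (u.length + (j + 1)) :=
    Or.inr ⟨u.length, hi, by omega, by
      rw [getD_append_cons_length, hwj]; exact hv _ (getD_mem_of_lt hj)⟩
  simp only [IsAdmissibleInversion, hwj, List.getD_append _ _ _ _ hi, hadm, and_true]
  exact and_iff_right (by omega)

lemma ai_cons_of_lt (hv : ∀ y ∈ v, m < y) : ai (m :: v) = ai v := by
  rw [← List.singleton_append, ai_append]
  have hrow : ∀ j ∈ range v.length,
      (if IsAdmissibleInversion ([m] ++ v) 0 ([m].length + j) then 1 else 0) = 0 := by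
    intro j hj
    refine if_neg fun h => ?_
    have hlt := h.2.1
    rw [getD_append_length_add] at hlt
    exact absurd (hv _ (getD_mem_of_lt (mem_range.1 hj))) (not_lt.2 hlt.le)
  simp only [List.length_singleton, sum_range_one] at hrow ⊢
  rw [sum_eq_zero hrow, if_neg fun h => lt_irrefl 0 h.1]
  simp

lemma sum_isAdmissibleInversion_append_cons_cross (hu : ∀ x ∈ u, m < x) (hv : ∀ y ∈ v, m < y) :
    ∑ i ∈ range u.length, ∑ j ∈ range (m :: v).length,
        (if IsAdmissibleInversion (u ++ m :: v) i (u.length + j) then 1 else 0) =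
      crossInv u v + if v = [] then 0 else u.length := by
  have hrow : ∀ i ∈ range u.length, ∑ j ∈ range (m :: v).length,
      (if IsAdmissibleInversion (u ++ m :: v) i (u.length + j) then 1 else 0) =
        v.countP (· < u.getD i 0) + if v = [] then 0 else 1 := by
    intro i hi
    rw [mem_range] at hi
    rw [List.length_cons, sum_range_succ', Nat.add_zero, ← sum_range_length_ite_getD]
    congr 1
    · refine sum_congr rfl fun j hj => ?_
      simp only [isAdmissibleInversion_append_cons_right hv hi (mem_range.1 hj), decide_eq_true_eq]
    · simp only [isAdmissibleInversion_append_cons_length hu hv hi, ite_not]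
  rw [sum_congr rfl hrow, sum_add_distrib, sum_const, card_range, smul_eq_mul, crossInv,
    ← sum_range_length_getD]
  split_ifs <;> simp

lemma ai_append_cons (hu : ∀ x ∈ u, m < x) (hv : ∀ y ∈ v, m < y) :
    ai (u ++ m :: v) = ai u + ai v + crossInv u v + if v = [] then 0 else u.length := by
  have hleft : ∑ i ∈ range u.length, ∑ j ∈ range u.length,
      (if IsAdmissibleInversion (u ++ m :: v) i j then 1 else 0) = ai u := by
    rw [ai_eq_sum]
    exact sum_congr rfl fun i hi => sum_congr rfl fun j hj =>
      if_congr (isAdmissibleInversion_append_cons_left hu (mem_range.1 hi) (mem_range.1 hj)) rfl rfl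
  rw [ai_append, hleft, sum_isAdmissibleInversion_append_cons_cross hu hv, ai_cons_of_lt hv]
  ring

lemma des_cons_cons (a b : ℕ) (l : List ℕ) :
    des (a :: b :: l) = (if b < a then 1 else 0) + des (b :: l) := by
  rw [des, des, card_filter, card_filter]
  simp only [List.length_cons, Nat.add_sub_cancel]
  rw [sum_range_succ', add_comm]
  simp only [List.getD_cons_succ, List.getD_cons_zero]

lemma des_cons_of_lt (hv : ∀ y ∈ v, m < y) : des (m :: v) = des v := by
  cases v with
  | nil => rfl
  | cons y v => rw [des_cons_cons, if_neg (not_lt.2 (hv y (by simp)).le), zero_add]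

lemma des_append_cons (hv : ∀ y ∈ v, m < y) :
    ∀ {u : List ℕ}, u ≠ [] → (∀ x ∈ u, m < x) → des (u ++ m :: v) = des u + des v + 1
  | [x], _, hu => by
    rw [List.singleton_append, des_cons_cons, if_pos (hu x (by simp)), des_cons_of_lt hv]
    simp [des, add_comm]
  | x :: y :: u, _, hu => by
    rw [List.cons_append, List.cons_append, des_cons_cons, ← List.cons_append,
      des_append_cons hv (List.cons_ne_nil y u) fun z hz => hu z (List.mem_cons_of_mem x hz),
      des_cons_cons]
    ring

lemma aid_cons_of_lt (hv : ∀ y ∈ v, m < y) : aid (m :: v) = aid v := by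
  rw [aid, aid, ai_cons_of_lt hv, des_cons_of_lt hv]

lemma aid_append_cons (hu₀ : u ≠ []) (hu : ∀ x ∈ u, m < x) (hv : ∀ y ∈ v, m < y) :
    aid (u ++ m :: v) =
      aid u + aid v + crossInv u v + if v = [] then 1 else u.length + 1 := by
  rw [aid, aid, aid, ai_append_cons hu hv, des_append_cons hv hu₀ hu]
  split_ifs <;> ring

end MinimumInMiddle

lemma aid_nil : aid [] = 0 := rfl

lemma aid_singleton (k : ℕ) : aid [k] = 0 := by
  rw [aid_cons_of_lt (by simp), aid_nil]

lemma aid_append_singleton {u : List ℕ} {m : ℕ} (hu₀ : u ≠ []) (hu : ∀ x ∈ u, m < x) :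
    aid (u ++ [m]) = aid u + 1 := by
  rw [aid_append_cons hu₀ hu (by simp), crossInv_nil_right, aid_nil, if_pos rfl]

lemma aid_cons_cons_of_lt {k m : ℕ} {v : List ℕ} (hmk : m < k) (hv₀ : v ≠ [])
    (hv : ∀ y ∈ v, m < y) : aid (k :: m :: v) = aid v + v.countP (· < k) + 2 := by
  rw [← List.singleton_append, aid_append_cons (List.cons_ne_nil k []) (by simpa using hmk) hv,
    aid_singleton, crossInv_cons, crossInv, if_neg hv₀]
  simp

lemma foldr_min_eq {x m : ℕ} {xs : List ℕ} (hm : m ∈ x :: xs) (hle : ∀ a ∈ x :: xs, m ≤ a) :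
    xs.foldr min x = m := by
  have hmin : xs.foldr min x = (x :: xs).min (List.cons_ne_nil x xs) := by
    rw [← List.foldl_eq_foldr]
    rfl
  rw [hmin]
  exact le_antisymm (List.min_le_of_mem hm) ((List.le_min_iff _).2 hle)

lemma fkt_append_cons (k : ℕ) {α β : List ℕ} {m : ℕ} (hα : ∀ a ∈ α, m < a)
    (hβ : ∀ b ∈ β, m < b) :
    fkt k (α ++ m :: β) =
      if k < m then k :: (α ++ m :: β)
      else if α = [] then fkt k β ++ [m]
      else if β = [] then k :: m :: α
      else fkt k α ++ m :: β := by
  obtain ⟨x, xs, hxs⟩ := List.exists_cons_of_ne_nil (List.append_ne_nil_of_right_ne_nil α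
    (List.cons_ne_nil m β))
  have hmin : xs.foldr min x = m := by
    refine foldr_min_eq (hxs ▸ by simp) fun a ha => ?_
    rw [← hxs, List.mem_append, List.mem_cons] at ha
    rcases ha with ha | rfl | ha
    exacts [(hα a ha).le, le_rfl, (hβ a ha).le]
  have hne : ∀ a ∈ α, decide (a ≠ m) = true := fun a ha => by simpa using (hα a ha).ne'
  have htake : (α ++ m :: β).takeWhile (fun a => decide (a ≠ m)) = α := by
    rw [List.takeWhile_append_of_pos hne]
    simp
  have hdrop : (α ++ m :: β).dropWhile (fun a => decide (a ≠ m)) = m :: β := by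
    rw [List.dropWhile_append_of_pos hne]
    simp
  rw [hxs, fkt, hmin, ← hxs, htake, hdrop, List.tail_cons]

lemma exists_min_split {τ : List ℕ} (hne : τ ≠ []) (hτ : τ.Nodup) :
    ∃ α m β, τ = α ++ m :: β ∧ (∀ a ∈ α, m < a) ∧ ∀ b ∈ β, m < b := by
  obtain ⟨α, β, hsplit⟩ := List.append_of_mem (List.min_mem hne)
  have hmin : ∀ a ∈ τ, a ≠ τ.min hne → τ.min hne < a := fun a ha hne' =>
    lt_of_le_of_ne (List.min_le_of_mem ha) hne'.symm
  have hnd := hsplit ▸ hτ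
  rw [List.nodup_middle, List.nodup_cons, List.mem_append, not_or] at hnd
  refine ⟨α, τ.min hne, β, hsplit, fun a ha => hmin a ?_ ?_, fun b hb => hmin b ?_ ?_⟩
  · rw [hsplit]; simp [ha]
  · rintro rfl; exact hnd.1.1 ha
  · rw [hsplit]; simp [hb]
  · rintro rfl; exact hnd.1.2 hb

theorem induction_on_min_split {motive : List ℕ → Prop} (nil : motive [])
    (append_cons : ∀ α m β, (∀ a ∈ α, m < a) → (∀ b ∈ β, m < b) → (α ++ m :: β).Nodup →
      motive α → motive β → motive (α ++ m :: β)) :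
    ∀ τ : List ℕ, τ.Nodup → motive τ := by
  intro τ hτ
  induction hlen : τ.length using Nat.strong_induction_on generalizing τ with
  | _ n ih =>
    rcases eq_or_ne τ [] with rfl | hne
    · exact nil
    obtain ⟨α, m, β, rfl, hα, hβ⟩ := exists_min_split hne hτ
    rw [List.length_append, List.length_cons] at hlen
    exact append_cons α m β hα hβ hτ
      (ih _ (by omega) α (hτ.sublist (List.sublist_append_left _ _)) rfl)
      (ih _ (by omega) β (hτ.sublist (List.sublist_append_right _ _)).of_cons rfl)

theorem fkt_perm (k : ℕ) {τ : List ℕ} (hτ : τ.Nodup) : (fkt k τ).Perm (k :: τ) := by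
  refine induction_on_min_split (motive := fun τ => (fkt k τ).Perm (k :: τ))
    (by simp [fkt]) (fun α m β hα hβ _ ihα ihβ => ?_) τ hτ
  rw [fkt_append_cons k hα hβ]
  split_ifs with hkm hα₀ hβ₀
  · rfl
  · subst hα₀
    simpa using (ihβ.append_right [m]).trans ((List.perm_append_singleton m _).trans
      (List.Perm.swap k m β))
  · subst hβ₀
    exact List.Perm.cons k (List.perm_append_singleton m α).symm
  · exact ihα.append_right (m :: β)

lemma fkt_ne_nil (k : ℕ) {τ : List ℕ} (hτ : τ.Nodup) : fkt k τ ≠ [] :=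
  fun h => by simpa [h] using fkt_perm k hτ

lemma lt_of_mem_fkt {k m y : ℕ} {τ : List ℕ} (hτ : τ.Nodup) (hmk : m < k) (hm : ∀ a ∈ τ, m < a)
    (hy : y ∈ fkt k τ) : m < y := by
  rcases List.mem_cons.1 ((fkt_perm k hτ).mem_iff.1 hy) with rfl | hy
  exacts [hmk, hm y hy]

theorem aid_fkt {k : ℕ} {τ : List ℕ} (hτ : τ.Nodup) (hk : k ∉ τ) :
    aid (fkt k τ) = aid τ + τ.countP (· < k) := by
  refine induction_on_min_split
    (motive := fun τ => k ∉ τ → aid (fkt k τ) = aid τ + τ.countP (· < k))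
    (fun _ => by simp [fkt, aid_singleton, aid_nil]) (fun α m β hα hβ hnd ihα ihβ hk => ?_) τ hτ hk
  simp only [List.mem_append, List.mem_cons, not_or] at hk
  obtain ⟨hkα, hkm, hkβ⟩ := hk
  have hαnd : α.Nodup := hnd.sublist (List.sublist_append_left _ _)
  have hβnd : β.Nodup := (hnd.sublist (List.sublist_append_right _ _)).of_cons
  rw [fkt_append_cons k hα hβ]
  by_cases hkm' : k < m
  · have hlt : ∀ a ∈ α ++ m :: β, k < a := by
      simp only [List.mem_append, List.mem_cons]
      rintro a (ha | rfl | ha)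
      exacts [hkm'.trans (hα a ha), hkm', hkm'.trans (hβ a ha)]
    rw [if_pos hkm', aid_cons_of_lt hlt, List.countP_eq_zero.2 fun a ha => by simpa using
      (hlt a ha).le, add_zero]
  have hmk : m < k := by omega
  have hcount : (α ++ m :: β).countP (· < k) = α.countP (· < k) + β.countP (· < k) + 1 := by
    simp only [List.countP_append, List.countP_cons, hmk, decide_true, if_true]
    ring
  rw [if_neg hkm', hcount]
  split_ifs with hα₀ hβ₀
  · subst hα₀
    rw [aid_append_singleton (fkt_ne_nil k hβnd) fun y => lt_of_mem_fkt hβnd hmk hβ, ihβ hkβ,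
      List.nil_append, aid_cons_of_lt hβ, List.countP_nil]
    ring
  · subst hβ₀
    rw [aid_cons_cons_of_lt hmk hα₀ hα, aid_append_singleton hα₀ hα, List.countP_nil]
    ring
  · rw [aid_append_cons (fkt_ne_nil k hαnd) (fun y => lt_of_mem_fkt hαnd hmk hα) hβ,
      aid_append_cons hα₀ hα hβ, if_neg hβ₀, if_neg hβ₀, ihα hkα,
      crossInv_eq_of_perm (fkt_perm k hαnd), crossInv_cons, (fkt_perm k hαnd).length_eq,
      List.length_cons]
    ring

lemma inv_cons (k : ℕ) (τ : List ℕ) :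
    inv (k :: τ) = τ.countP (· < k) + inv τ := by
  rw [inv, inv, card_filter, card_filter, sum_product, sum_product, List.length_cons,
    sum_range_succ', add_comm]
  congr 1
  · rw [sum_range_succ', ← sum_range_length_ite_getD]
    simp only [List.getD_cons_succ, List.getD_cons_zero, lt_irrefl, Nat.zero_lt_succ, true_and,
      false_and, if_false, add_zero, decide_eq_true_eq]
  · refine sum_congr rfl fun i _ => ?_
    rw [sum_range_succ']
    simp only [List.getD_cons_succ, Nat.add_lt_add_iff_right, Nat.not_lt_zero, false_and,
      if_false, add_zero]

lemma phiW_perm {w : List ℕ} (hw : w.Nodup) : (phiW w).Perm w := by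
  induction w with
  | nil => rfl
  | cons k w ih =>
    have hperm := ih (List.nodup_cons.1 hw).2
    exact (fkt_perm k (hperm.nodup_iff.2 (List.nodup_cons.1 hw).2)).trans (hperm.cons k)

theorem aid_phiW {w : List ℕ} (hw : w.Nodup) : aid (phiW w) = inv w := by
  induction w with
  | nil => rfl
  | cons k w ih =>
    obtain ⟨hk, hw⟩ := List.nodup_cons.1 hw
    have hperm := phiW_perm hw
    change aid (fkt k (phiW w)) = inv (k :: w)
    rw [aid_fkt (hperm.nodup_iff.2 hw) fun h => hk (hperm.mem_iff.1 h), ih hw, hperm.countP_eq,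
      inv_cons, add_comm]

/-- For every permutation `π ∈ S_n`, `aid φ(π) = inv π`. -/
theorem aid_phi_eq_inv (n : ℕ) (π : Equiv.Perm (Fin n)) :
    aid (phiW (permList π)) = inv (permList π) :=
  aid_phiW (List.nodup_ofFn.2 fun i j h => π.injective (Fin.ext (by simpa using h)))

end PaperStats
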